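/- For finite networks X and Y, Type I weak isomorphism and Type II weak isomorphism are equivalent: there exists a set Z with surjections φX : Z → X, φY : Z → Y such that ωX(φX(z),φX(z')) = ωY(φY(z),φY(z')) for all z,z' ∈ Z if and only if for every ε > 0 such surjections exist with |ωX(φX(z),φX(z')) − ωY(φY(z),φY(z'))| < ε for all z,z' ∈ Z. -/

import Mathlib

/-!
Every witness `(Z, φX, φY)` can be replaced by its image `{(φX z, φY z)}`, a correspondence
between `X` and `Y` with the same distortion. Since `X × Y` is finite there are only finitely many
correspondences, so a single one works for arbitrarily small `ε`; its distortion is then zero and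
it is itself a Type I witness.
-/

open Function Filter Topology

universe u

section Correspondence

variable {X Y : Type*}

def IsCorrespondence (R : Set (X × Y)) : Prop :=
  Surjective (fun p : R => p.1.1) ∧ Surjective (fun p : R => p.1.2)

theorem isCorrespondence_range {Z : Type*} {φX : Z → X} {φY : Z → Y}
    (hX : Surjective φX) (hY : Surjective φY) :
    IsCorrespondence (Set.range fun z => (φX z, φY z)) := by
  constructor
  · intro x
    obtain ⟨z, rfl⟩ := hX x
    exact ⟨⟨_, z, rfl⟩, rfl⟩
  · intro y
    obtain ⟨z, rfl⟩ := hY y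
    exact ⟨⟨_, z, rfl⟩, rfl⟩

end Correspondence

theorem Finite.exists_forall_pos_of_monotone {α : Type*} [Finite α] {P : α → ℝ → Prop}
    (hP : ∀ a, Monotone (P a)) (h : ∀ ε > 0, ∃ a, P a ε) : ∃ a, ∀ ε > 0, P a ε := by
  have : Nonempty α := (h 1 one_pos).nonempty
  choose! f hf using h
  obtain ⟨a, ha⟩ : ∃ a, ∃ᶠ ε in 𝓝[>] (0 : ℝ), f ε = a :=
    frequently_exists.1 (Frequently.of_forall fun ε => ⟨f ε, rfl⟩)
  refine ⟨a, fun δ hδ => ?_⟩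
  obtain ⟨ε, rfl, hε, hεδ⟩ := (ha.and_eventually (Ioo_mem_nhdsGT hδ)).exists
  exact hP _ hεδ.le (hf ε hε)

theorem typeI_iff_typeII_of_finite {X Y : Type u} [Fintype X] [Fintype Y]
    (ωX : X → X → ℝ) (ωY : Y → Y → ℝ) :
    (∃ (Z : Type u) (φX : Z → X) (φY : Z → Y),
      Surjective φX ∧ Surjective φY ∧
      ∀ z z' : Z, ωX (φX z) (φX z') = ωY (φY z) (φY z')) ↔
    (∀ ε : ℝ, 0 < ε → ∃ (Z : Type u) (φX : Z → X) (φY : Z → Y),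
      Surjective φX ∧ Surjective φY ∧
      ∀ z z' : Z, |ωX (φX z) (φX z') - ωY (φY z) (φY z')| < ε) := by
  refine ⟨fun ⟨Z, φX, φY, hX, hY, h⟩ ε hε => ⟨Z, φX, φY, hX, hY, fun z z' => by simpa [h z z']⟩,
    fun h => ?_⟩
  obtain ⟨R, hR⟩ := Finite.exists_forall_pos_of_monotone
    (P := fun (R : Set (X × Y)) ε =>
      IsCorrespondence R ∧ ∀ p ∈ R, ∀ q ∈ R, |ωX p.1 q.1 - ωY p.2 q.2| < ε)
    (fun R ε ε' hle hR => ⟨hR.1, fun p hp q hq => (hR.2 p hp q hq).trans_le hle⟩)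
    (fun ε hε => by
      obtain ⟨Z, φX, φY, hX, hY, hZ⟩ := h ε hε
      exact ⟨_, isCorrespondence_range hX hY,
        Set.forall_mem_range.2 fun z => Set.forall_mem_range.2 (hZ z)⟩)
  obtain ⟨⟨hX, hY⟩, -⟩ := hR 1 one_pos
  refine ⟨R, _, _, hX, hY, fun p q => eq_of_forall_dist_le fun ε hε => ?_⟩
  exact ((hR ε hε).2 p p.2 q q.2).le
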